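/- arXiv:math/9411228 — 5 statements merged into one kernel-verified Lean document; each statement's English description precedes it below -/
import Mathlib

section
/- Let μ, ν, β be real numbers with μ > −1 and ν > μ + 1. Then ∫₀¹ x^μ (1−x)^{ν−μ−2} e^{−β x (1−x)} dx = (Γ(μ+1) Γ(ν−μ−1) / Γ(ν)) · ₂F₂(μ+1, ν−μ−1; ν/2, (ν+1)/2; −β/4), where the ₂F₂ series converges absolutely for every real argument. -/
open MeasureTheory Set

/-- Pochhammer symbol `(c)_n = c(c+1)⋯(c+n−1)` for a real `c`. -/
noncomputable def poch (c : ℝ) (n : ℕ) : ℝ := ∏ i ∈ Finset.range n, (c + i)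

/-- The generalized hypergeometric series `₂F₂(a₁,a₂;b₁,b₂;z)`. -/
noncomputable def hyp2F2 (a₁ a₂ b₁ b₂ z : ℝ) : ℝ :=
  ∑' n : ℕ, poch a₁ n * poch a₂ n / (poch b₁ n * poch b₂ n) * z ^ n / n.factorial

lemma poch_succ (c : ℝ) (n : ℕ) : poch c (n + 1) = poch c n * (c + n) := by
  simp [poch, Finset.prod_range_succ]

lemma poch_pos {c : ℝ} (hc : 0 < c) (n : ℕ) : 0 < poch c n := by
  induction n with
  | zero => simp [poch]
  | succ n ih => rw [poch_succ]; positivity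

lemma Gamma_poch {c : ℝ} (hc : 0 < c) (n : ℕ) :
    Real.Gamma (c + n) = Real.Gamma c * poch c n := by
  induction n with
  | zero => simp [poch]
  | succ n ih =>
    have h : c + (n + 1 : ℕ) = (c + n) + 1 := by push_cast; ring
    rw [h, Real.Gamma_add_one (by positivity), ih, poch_succ]; ring

lemma poch_double (c : ℝ) (n : ℕ) :
    poch c (2 * n) = 4 ^ n * poch (c / 2) n * poch ((c + 1) / 2) n := by
  induction n with
  | zero => simp [poch]
  | succ n ih =>
    have h : 2 * (n + 1) = (2 * n) + 1 + 1 := by ring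
    rw [h, poch_succ, poch_succ, ih, poch_succ, poch_succ]
    push_cast
    ring

lemma real_beta (a b : ℝ) (ha : 0 < a) (hb : 0 < b) :
    ∫ x in Ioo (0:ℝ) 1, x ^ (a - 1) * (1 - x) ^ (b - 1)
      = Real.Gamma a * Real.Gamma b / Real.Gamma (a + b) := by
  have key : Complex.Gamma a * Complex.Gamma b
      = Complex.Gamma (a + b) * Complex.betaIntegral a b :=
    Complex.Gamma_mul_Gamma_eq_betaIntegral (by simpa using ha) (by simpa using hb)
  have hB : Complex.betaIntegral a b
      = ((∫ x in Ioo (0:ℝ) 1, x ^ (a - 1) * (1 - x) ^ (b - 1) : ℝ) : ℂ) := by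
    rw [Complex.betaIntegral, intervalIntegral.integral_of_le zero_le_one,
      MeasureTheory.integral_Ioc_eq_integral_Ioo]
    have : ∀ x ∈ Ioo (0:ℝ) 1, (x:ℂ) ^ ((a:ℂ) - 1) * (1 - (x:ℂ)) ^ ((b:ℂ) - 1)
        = ((x ^ (a - 1) * (1 - x) ^ (b - 1) : ℝ) : ℂ) := by
      intro x hx
      rw [show ((a:ℂ) - 1) = ((a - 1 : ℝ) : ℂ) by push_cast; ring,
        show ((b:ℂ) - 1) = ((b - 1 : ℝ) : ℂ) by push_cast; ring,
        show (1 - (x:ℂ)) = ((1 - x : ℝ) : ℂ) by push_cast; ring,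
        ← Complex.ofReal_cpow hx.1.le, ← Complex.ofReal_cpow (by linarith [hx.2])]
      push_cast
      ring
    rw [setIntegral_congr_fun measurableSet_Ioo this]
    exact integral_ofReal
  have hG : Real.Gamma (a + b) ≠ 0 := (Real.Gamma_pos_of_pos (by linarith)).ne'
  have h := key
  rw [hB, ← Complex.ofReal_add, Complex.Gamma_ofReal, Complex.Gamma_ofReal,
    Complex.Gamma_ofReal, ← Complex.ofReal_mul, ← Complex.ofReal_mul] at h
  have h2 : Real.Gamma a * Real.Gamma b
      = Real.Gamma (a + b) * ∫ x in Ioo (0:ℝ) 1, x ^ (a - 1) * (1 - x) ^ (b - 1) := by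
    exact_mod_cast h
  field_simp
  linarith [h2]

lemma real_beta_integrable (a b : ℝ) (ha : 0 < a) (hb : 0 < b) :
    IntegrableOn (fun x => x ^ (a - 1) * (1 - x) ^ (b - 1)) (Ioo (0:ℝ) 1) := by
  have h := Complex.betaIntegral_convergent (u := a) (v := b) (by simpa using ha)
    (by simpa using hb)
  rw [intervalIntegrable_iff_integrableOn_Ioo_of_le zero_le_one] at h
  have h2 : IntegrableOn (fun x : ℝ =>
      ((fun x : ℝ => (x:ℂ) ^ ((a:ℂ) - 1) * (1 - (x:ℂ)) ^ ((b:ℂ) - 1)) x).re)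
      (Ioo (0:ℝ) 1) := h.re
  refine h2.congr_fun (fun x hx => ?_) measurableSet_Ioo
  simp only
  rw [show ((a:ℂ) - 1) = ((a - 1 : ℝ) : ℂ) by push_cast; ring,
    show ((b:ℂ) - 1) = ((b - 1 : ℝ) : ℂ) by push_cast; ring,
    show (1 - (x:ℂ)) = ((1 - x : ℝ) : ℂ) by push_cast; ring,
    ← Complex.ofReal_cpow hx.1.le, ← Complex.ofReal_cpow (by linarith [hx.2]),
    ← Complex.ofReal_mul, Complex.ofReal_re]

/-- For `μ > −1` and `ν > μ + 1`:
`∫₀¹ x^μ (1−x)^{ν−μ−2} e^{−βx(1−x)} dx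
  = (Γ(μ+1)Γ(ν−μ−1)/Γ(ν)) ₂F₂(μ+1,ν−μ−1;ν/2,(ν+1)/2;−β/4)`. -/
theorem integral_beta_exp_quadratic (μ ν β : ℝ) (hμ : -1 < μ) (hν : μ + 1 < ν) :
    ∫ x in Ioo (0:ℝ) 1, x ^ μ * (1 - x) ^ (ν - μ - 2) * Real.exp (-(β * x * (1 - x)))
      = Real.Gamma (μ + 1) * Real.Gamma (ν - μ - 1) / Real.Gamma ν *
          hyp2F2 (μ + 1) (ν - μ - 1) (ν / 2) ((ν + 1) / 2) (-β / 4) := by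
  have ha : (0:ℝ) < μ + 1 := by linarith
  have hb : (0:ℝ) < ν - μ - 1 := by linarith
  have hν0 : (0:ℝ) < ν := by linarith
  have hΓν : Real.Gamma ν ≠ 0 := (Real.Gamma_pos_of_pos hν0).ne'
  -- the summand functions
  set g : ℕ → ℝ → ℝ := fun n x =>
    ((-β) ^ n / n.factorial) * (x ^ (μ + n) * (1 - x) ^ (ν - μ - 2 + n)) with hg
  -- integrability of each basic beta integrand
  have hInt : ∀ n : ℕ, IntegrableOn
      (fun x => x ^ (μ + n) * (1 - x) ^ (ν - μ - 2 + n)) (Ioo (0:ℝ) 1) := by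
    intro n
    have := real_beta_integrable (μ + 1 + n) (ν - μ - 1 + n) (by positivity) (by positivity)
    simpa [show μ + 1 + (n:ℝ) - 1 = μ + n by ring,
      show ν - μ - 1 + (n:ℝ) - 1 = ν - μ - 2 + n by ring] using this
  -- the values of the basic beta integrals
  have hBn : ∀ n : ℕ, (∫ x in Ioo (0:ℝ) 1, x ^ (μ + n) * (1 - x) ^ (ν - μ - 2 + n))
      = Real.Gamma (μ + 1 + n) * Real.Gamma (ν - μ - 1 + n) / Real.Gamma (ν + 2 * n) := by
    intro n
    have := real_beta (μ + 1 + n) (ν - μ - 1 + n) (by positivity) (by positivity)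
    simpa [show μ + 1 + (n:ℝ) - 1 = μ + n by ring,
      show ν - μ - 1 + (n:ℝ) - 1 = ν - μ - 2 + n by ring,
      show μ + 1 + (n:ℝ) + (ν - μ - 1 + n) = ν + 2 * n by ring] using this
  -- nonnegativity / monotone bound on the beta integrals
  have hmono : ∀ n : ℕ, (∫ x in Ioo (0:ℝ) 1, x ^ (μ + n) * (1 - x) ^ (ν - μ - 2 + n))
      ≤ ∫ x in Ioo (0:ℝ) 1, x ^ μ * (1 - x) ^ (ν - μ - 2) := by
    intro n
    refine setIntegral_mono_on (hInt n) ?_ measurableSet_Ioo (fun x hx => ?_)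
    · simpa using hInt 0
    · have hx0 : (0:ℝ) < x := hx.1
      have hx1 : (0:ℝ) < 1 - x := by linarith [hx.2]
      rw [Real.rpow_add hx0, Real.rpow_add hx1, Real.rpow_natCast, Real.rpow_natCast]
      have h1 : x ^ n ≤ 1 := pow_le_one₀ hx0.le (by linarith [hx.2])
      have h2 : (1 - x) ^ n ≤ 1 := pow_le_one₀ hx1.le (by linarith [hx.1])
      calc x ^ μ * x ^ n * ((1 - x) ^ (ν - μ - 2) * (1 - x) ^ n)
          ≤ x ^ μ * 1 * ((1 - x) ^ (ν - μ - 2) * 1) := by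
            apply mul_le_mul
            · exact mul_le_mul_of_nonneg_left h1 (Real.rpow_nonneg hx0.le _)
            · exact mul_le_mul_of_nonneg_left h2 (Real.rpow_nonneg hx1.le _)
            · exact mul_nonneg (Real.rpow_nonneg hx1.le _) (pow_nonneg hx1.le _)
            · exact mul_nonneg (Real.rpow_nonneg hx0.le _) zero_le_one
        _ = x ^ μ * (1 - x) ^ (ν - μ - 2) := by ring
  have hB0nonneg : ∀ n : ℕ,
      0 ≤ ∫ x in Ioo (0:ℝ) 1, x ^ (μ + n) * (1 - x) ^ (ν - μ - 2 + n) := by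
    intro n
    apply setIntegral_nonneg measurableSet_Ioo
    intro x hx
    have hx1 : (0:ℝ) < 1 - x := by linarith [hx.2]
    exact mul_nonneg (Real.rpow_nonneg hx.1.le _) (Real.rpow_nonneg hx1.le _)
  -- rewrite the integrand as a series
  have hser : ∀ x ∈ Ioo (0:ℝ) 1,
      x ^ μ * (1 - x) ^ (ν - μ - 2) * Real.exp (-(β * x * (1 - x))) = ∑' n, g n x := by
    intro x hx
    have hx0 : (0:ℝ) < x := hx.1
    have hx1 : (0:ℝ) < 1 - x := by linarith [hx.2]
    have hexp : Real.exp (-(β * x * (1 - x)))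
        = ∑' n : ℕ, (-(β * x * (1 - x))) ^ n / n.factorial := by
      rw [Real.exp_eq_exp_ℝ, NormedSpace.exp_eq_tsum_div]
    rw [hexp, ← tsum_mul_left]
    refine tsum_congr fun n => ?_
    rw [hg]
    simp only
    rw [show -(β * x * (1 - x)) = (-β) * x * (1 - x) by ring, mul_pow, mul_pow,
      Real.rpow_add hx0, Real.rpow_add hx1, Real.rpow_natCast, Real.rpow_natCast]
    field_simp
  rw [setIntegral_congr_fun measurableSet_Ioo hser]
  -- swap integral and sum
  rw [← MeasureTheory.integral_tsum_of_summable_integral_norm]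
  · -- compute each integral and sum up
    have hterm : ∀ n : ℕ, (∫ x in Ioo (0:ℝ) 1, g n x)
        = Real.Gamma (μ + 1) * Real.Gamma (ν - μ - 1) / Real.Gamma ν *
            (poch (μ + 1) n * poch (ν - μ - 1) n /
              (poch (ν / 2) n * poch ((ν + 1) / 2) n) * (-β / 4) ^ n / n.factorial) := by
      intro n
      rw [hg]
      simp only
      rw [integral_const_mul, hBn n]
      rw [show μ + 1 + (n:ℝ) = (μ + 1) + (n:ℕ) by ring,
        show ν - μ - 1 + (n:ℝ) = (ν - μ - 1) + (n:ℕ) by ring,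
        show ν + 2 * (n:ℝ) = ν + ((2 * n : ℕ) : ℝ) by push_cast; ring,
        Gamma_poch ha, Gamma_poch hb, Gamma_poch hν0, poch_double]
      have p1 : 0 < poch (ν / 2) n := poch_pos (by positivity) n
      have p2 : 0 < poch ((ν + 1) / 2) n := poch_pos (by positivity) n
      have hf : ((n.factorial : ℝ)) ≠ 0 := Nat.cast_ne_zero.mpr n.factorial_ne_zero
      rw [show ((-β / 4) ^ n : ℝ) = (-β) ^ n / 4 ^ n by rw [div_pow]]
      field_simp
    rw [tsum_congr hterm, tsum_mul_left]
    rfl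
  · -- integrability of each summand
    intro n
    exact (hInt n).const_mul _
  · -- summability of the integrals of the norms
    have heq : ∀ n : ℕ, (∫ x in Ioo (0:ℝ) 1, ‖g n x‖)
        = (|β| ^ n / n.factorial) *
          ∫ x in Ioo (0:ℝ) 1, x ^ (μ + n) * (1 - x) ^ (ν - μ - 2 + n) := by
      intro n
      rw [← integral_const_mul]
      refine setIntegral_congr_fun measurableSet_Ioo fun x hx => ?_
      have hx0 : (0:ℝ) < x := hx.1
      have hx1 : (0:ℝ) < 1 - x := by linarith [hx.2]
      rw [hg]
      simp only
      rw [Real.norm_eq_abs, abs_mul, abs_div, abs_pow, abs_neg, Nat.abs_cast,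
        abs_of_nonneg
          (mul_nonneg (Real.rpow_nonneg hx0.le _) (Real.rpow_nonneg hx1.le _))]
    refine Summable.of_nonneg_of_le
      (fun n => integral_nonneg fun x => norm_nonneg _) (fun n => ?_)
      ((Real.summable_pow_div_factorial |β|).mul_right
        (∫ x in Ioo (0:ℝ) 1, x ^ μ * (1 - x) ^ (ν - μ - 2)))
    rw [heq n]
    exact mul_le_mul_of_nonneg_left (hmono n) (by positivity)
end

section
/- Let a > 0, b > 0 and let ν be a real number with ν > 1/2. Then ∫₀^∞ [x² / ((x²+a²)(x²+b²))]^ν dx = 4^{ν−1} Γ(ν+1/2) Γ(ν−1/2) / (Γ(2ν) (a+b)^{2ν−1}). -/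
/-!
Since `x² / ((x² + a²)(x² + b²)) = ((x - ab/x)² + (a + b)²)⁻¹`, the integrand is `g (x - ab/x)`
for the even integrable function `g u = (u² + (a + b)²)^(-ν)`. The Cauchy–Schlömilch substitution
`u = x - ab/x` shows `∫₀^∞ g (x - ab/x) dx = ∫₀^∞ g`. Scaling `u = (a + b) t` and substituting
`x = t² / (1 + t²)` turn this into `(a + b)^(1 - 2ν) B(1/2, ν - 1/2) / 2`, and Legendre's
duplication formula gives the stated closed form.
-/

open MeasureTheory Set Real

section Substitution

variable {E : Type*} [NormedAddCommGroup E] [NormedSpace ℝ E] {m : ℝ}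

theorem hasDerivAt_sub_div (m : ℝ) {x : ℝ} (hx : x ≠ 0) :
    HasDerivAt (fun x => x - m / x) (1 + m / x ^ 2) x := by
  have h := (hasDerivAt_id' x).fun_sub ((hasDerivAt_inv hx).const_mul m)
  simp only [← div_eq_mul_inv] at h
  exact h.congr_deriv (by ring)

theorem strictMonoOn_sub_div (hm : 0 < m) : StrictMonoOn (fun x => x - m / x) (Ioi 0) :=
  fun _ hx _ _ hxy => sub_lt_sub hxy (div_lt_div_of_pos_left hm hx hxy)

theorem image_sub_div_Ioi (hm : 0 < m) : (fun x => x - m / x) '' Ioi 0 = univ := by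
  refine eq_univ_of_forall fun u => ?_
  have hsq : √(u ^ 2 + 4 * m) ^ 2 = u ^ 2 + 4 * m := sq_sqrt (by positivity)
  have hlt : |u| < √(u ^ 2 + 4 * m) := by
    rw [← sqrt_sq_eq_abs]; exact sqrt_lt_sqrt (sq_nonneg u) (by linarith)
  have hx : 0 < u + √(u ^ 2 + 4 * m) := by linarith [neg_abs_le u]
  -- the positive root of `x ^ 2 - u * x - m`
  refine ⟨(u + √(u ^ 2 + 4 * m)) / 2, half_pos hx, ?_⟩
  field_simp
  linear_combination hsq

theorem integral_Ioi_comp_sub_div_smul (hm : 0 < m) (g : ℝ → E) :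
    ∫ x in Ioi 0, (1 + m / x ^ 2) • g (x - m / x) = ∫ x, g x := by
  have := integral_image_eq_integral_abs_deriv_smul measurableSet_Ioi
    (fun x hx => (hasDerivAt_sub_div m (ne_of_gt hx)).hasDerivWithinAt)
    (strictMonoOn_sub_div hm).injOn g
  rw [image_sub_div_Ioi hm, Measure.restrict_univ] at this
  rw [this]
  refine setIntegral_congr_fun measurableSet_Ioi fun x (hx : 0 < x) => ?_
  rw [abs_of_pos (by positivity)]

theorem integrableOn_Ioi_comp_sub_div_smul_iff (hm : 0 < m) (g : ℝ → E) :
    IntegrableOn (fun x => (1 + m / x ^ 2) • g (x - m / x)) (Ioi 0) ↔ Integrable g := by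
  have := integrableOn_image_iff_integrableOn_abs_deriv_smul measurableSet_Ioi
    (fun x hx => (hasDerivAt_sub_div m (ne_of_gt hx)).hasDerivWithinAt)
    (strictMonoOn_sub_div hm).injOn g
  rw [image_sub_div_Ioi hm, integrableOn_univ] at this
  rw [this]
  refine integrableOn_congr_fun (fun x (hx : 0 < x) => ?_) measurableSet_Ioi
  rw [abs_of_pos (by positivity)]

theorem integral_Ioi_comp_div_smul (hm : 0 < m) (f : ℝ → E) :
    ∫ x in Ioi 0, (m / x ^ 2) • f (m / x) = ∫ x in Ioi 0, f x := by
  have hderiv : ∀ x ∈ Ioi (0 : ℝ), HasDerivWithinAt (fun x => m / x) (-(m / x ^ 2)) (Ioi 0) x :=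
    fun x hx => by
      simpa [div_eq_mul_inv] using ((hasDerivAt_inv (ne_of_gt hx)).const_mul m).hasDerivWithinAt
  have hinj : InjOn (fun x => m / x) (Ioi 0) :=
    fun x _ y _ hxy => by simpa [hm.ne'] using congrArg (m / ·) hxy
  have himage : (fun x => m / x) '' Ioi 0 = Ioi 0 := by
    refine (image_subset_iff.2 fun x (hx : 0 < x) => div_pos hm hx).antisymm
      fun y (hy : 0 < y) => ⟨m / y, div_pos hm hy, by simp [div_div_cancel₀ hm.ne']⟩
  have := integral_image_eq_integral_abs_deriv_smul measurableSet_Ioi hderiv hinj f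
  rw [himage] at this
  rw [this]
  refine setIntegral_congr_fun measurableSet_Ioi fun x (hx : 0 < x) => ?_
  rw [abs_neg, abs_of_pos (by positivity)]

theorem integral_Ioi_comp_sub_div_of_even {g : ℝ → ℝ} (hm : 0 < m) (hg : Integrable g)
    (heven : g.Even) : ∫ x in Ioi 0, g (x - m / x) = ∫ x in Ioi 0, g x := by
  set h : ℝ → ℝ := fun x => g (x - m / x)
  have hk : IntegrableOn (fun x => (1 + m / x ^ 2) * h x) (Ioi 0) :=
    (integrableOn_Ioi_comp_sub_div_smul_iff hm g).2 hg
  have hh : IntegrableOn h (Ioi 0) := by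
    refine IntegrableOn.congr_fun (hk.bdd_mul (c := 1)
      (by fun_prop : Measurable fun x : ℝ => (1 + m / x ^ 2)⁻¹).aestronglyMeasurable ?_)
      (fun x (hx : 0 < x) => inv_mul_cancel_left₀ (by positivity) (h x)) measurableSet_Ioi
    refine ae_restrict_of_forall_mem measurableSet_Ioi fun x (hx : 0 < x) => ?_
    rw [norm_inv, Real.norm_of_nonneg (by positivity)]
    exact inv_le_one_of_one_le₀ (le_add_of_nonneg_right (by positivity))
  have hmh : IntegrableOn (fun x => m / x ^ 2 * h x) (Ioi 0) :=
    (hk.sub hh).congr_fun (fun x _ => by simp only [Pi.sub_apply]; ring) measurableSet_Ioi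
  -- `x ↦ m / x` swaps `x - m / x` and its negative
  have hinv : ∫ x in Ioi 0, m / x ^ 2 * h x = ∫ x in Ioi 0, h x := by
    rw [← integral_Ioi_comp_div_smul hm h]
    refine setIntegral_congr_fun measurableSet_Ioi fun x (hx : 0 < x) => ?_
    simp only [h, smul_eq_mul, div_div_cancel₀ hm.ne', ← heven (x - m / x), neg_sub]
  have hsum : ∫ x, g x = 2 * ∫ x in Ioi 0, h x := by
    rw [← integral_Ioi_comp_sub_div_smul hm g]
    simp only [smul_eq_mul, add_mul, one_mul]
    rw [integral_add hh hmh, hinv, two_mul]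
  have heven' : ∫ x, g x = 2 * ∫ x in Ioi 0, g x := by
    rw [← integral_comp_abs]
    refine integral_congr_ae (ae_of_all _ fun x => ?_)
    dsimp only
    rcases le_total 0 x with hx | hx
    · rw [abs_of_nonneg hx]
    · rw [abs_of_nonpos hx, heven]
  linarith

theorem integrable_sq_add_sq_rpow_neg {c ν : ℝ} (hc : c ≠ 0) (hν : 1 / 2 < ν) :
    Integrable fun u : ℝ => (u ^ 2 + c ^ 2) ^ (-ν) := by
  have h := ((integrable_rpow_neg_one_add_norm_sq (E := ℝ) (r := 2 * ν)
    (by simp; linarith)).comp_div hc).const_mul ((c ^ 2) ^ (-ν))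
  refine h.congr (ae_of_all _ fun u => ?_)
  simp only [Real.norm_eq_abs, sq_abs, div_pow]
  rw [show -(2 * ν) / 2 = -ν by ring, ← mul_rpow (by positivity) (by positivity)]
  field_simp
  rw [add_comm]

theorem integral_Ioi_sq_add_sq_rpow_neg {c : ℝ} (hc : 0 < c) (ν : ℝ) :
    ∫ u in Ioi 0, (u ^ 2 + c ^ 2) ^ (-ν) = c ^ (1 - 2 * ν) * ∫ t in Ioi 0, (1 + t ^ 2) ^ (-ν) := by
  have h := integral_comp_mul_left_Ioi (fun u => (u ^ 2 + c ^ 2) ^ (-ν)) 0 hc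
  rw [mul_zero, smul_eq_mul] at h
  rw [← mul_inv_cancel_left₀ hc.ne' (∫ u in Ioi 0, _), ← h, ← integral_const_mul,
    ← integral_const_mul]
  refine setIntegral_congr_fun measurableSet_Ioi fun t _ => ?_
  have hpow : c * (c ^ 2) ^ (-ν) = c ^ (1 - 2 * ν) := by
    rw [← rpow_natCast, ← rpow_mul hc.le, sub_eq_add_neg, rpow_add hc, rpow_one]
    ring_nf
  rw [show (c * t) ^ 2 + c ^ 2 = c ^ 2 * (1 + t ^ 2) by ring,
    mul_rpow (by positivity) (by positivity), ← mul_assoc, hpow]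

theorem integral_Ioo_rpow_mul_one_sub_rpow {p q : ℝ} (hp : 0 < p) (hq : 0 < q) :
    ∫ x in Ioo (0 : ℝ) 1, x ^ (p - 1) * (1 - x) ^ (q - 1) = Gamma p * Gamma q / Gamma (p + q) := by
  have hB : Complex.betaIntegral p q =
      ↑(∫ x in Ioo (0 : ℝ) 1, x ^ (p - 1) * (1 - x) ^ (q - 1)) := by
    rw [Complex.betaIntegral, ← integral_Ioc_eq_integral_Ioo,
      ← intervalIntegral.integral_of_le zero_le_one, ← intervalIntegral.integral_ofReal]
    refine intervalIntegral.integral_congr fun x hx => ?_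
    rw [uIcc_of_le zero_le_one] at hx
    push_cast
    rw [Complex.ofReal_cpow hx.1, Complex.ofReal_cpow (sub_nonneg.2 hx.2)]
    push_cast
    rfl
  have h := Complex.Gamma_mul_Gamma_eq_betaIntegral (s := p) (t := q) (by simpa) (by simpa)
  rw [hB, ← Complex.ofReal_add, Complex.Gamma_ofReal, Complex.Gamma_ofReal, Complex.Gamma_ofReal,
    ← Complex.ofReal_mul, ← Complex.ofReal_mul, Complex.ofReal_inj] at h
  rw [h, mul_div_cancel_left₀ _ (Gamma_pos_of_pos (add_pos hp hq)).ne']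

theorem hasDerivAt_sq_div_one_add_sq (t : ℝ) :
    HasDerivAt (fun t => t ^ 2 / (1 + t ^ 2)) (2 * t / (1 + t ^ 2) ^ 2) t := by
  have h := (hasDerivAt_pow 2 t).div ((hasDerivAt_pow 2 t).const_add 1) (by positivity)
  exact h.congr_deriv (by ring)

theorem strictMonoOn_sq_div_one_add_sq :
    StrictMonoOn (fun t : ℝ => t ^ 2 / (1 + t ^ 2)) (Ioi 0) := by
  intro s (hs : 0 < s) t (ht : 0 < t) hst
  rw [div_lt_div_iff₀ (by positivity) (by positivity)]
  nlinarith

theorem image_sq_div_one_add_sq_Ioi : (fun t : ℝ => t ^ 2 / (1 + t ^ 2)) '' Ioi 0 = Ioo 0 1 := by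
  ext y
  constructor
  · rintro ⟨t, ht : 0 < t, rfl⟩
    exact ⟨by positivity, (div_lt_one (by positivity)).2 (by linarith)⟩
  · rintro ⟨hy0, hy1⟩
    have hsq : √(y / (1 - y)) ^ 2 = y / (1 - y) := sq_sqrt (div_pos hy0 (by linarith)).le
    refine ⟨√(y / (1 - y)), sqrt_pos.2 (div_pos hy0 (by linarith)), ?_⟩
    dsimp only
    rw [hsq]
    field_simp
    ring

/-- The substitution `x = t ^ 2 / (1 + t ^ 2)` turns the beta integrand `B(1/2, ν - 1/2)`
into `(1 + t ^ 2) ^ (-ν)`. -/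
theorem abs_deriv_mul_beta_integrand {t : ℝ} (ht : 0 < t) (ν : ℝ) :
    |2 * t / (1 + t ^ 2) ^ 2| • ((t ^ 2 / (1 + t ^ 2)) ^ ((1 : ℝ) / 2 - 1) *
      (1 - t ^ 2 / (1 + t ^ 2)) ^ (ν - 1 / 2 - 1)) = 2 * (1 + t ^ 2) ^ (-ν) := by
  have hu : 0 < 1 + t ^ 2 := by positivity
  have h1 : 1 - t ^ 2 / (1 + t ^ 2) = (1 + t ^ 2)⁻¹ := by field_simp; ring
  have h2 : t ^ 2 / (1 + t ^ 2) = (t / √(1 + t ^ 2)) ^ 2 := by rw [div_pow, sq_sqrt hu.le]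
  rw [h1, h2, ← rpow_natCast_mul (by positivity), inv_rpow hu.le, abs_of_pos (by positivity),
    smul_eq_mul, show (2 : ℕ) * ((1 : ℝ) / 2 - 1) = -1 by norm_num, rpow_neg_one,
    rpow_sub hu, rpow_sub hu, rpow_one, ← sqrt_eq_rpow, rpow_neg hu.le]
  field_simp
  rw [sq_sqrt hu.le]

theorem integral_Ioi_one_add_sq_rpow_neg {ν : ℝ} (hν : 1 / 2 < ν) :
    ∫ t in Ioi 0, (1 + t ^ 2) ^ (-ν) = √π * Gamma (ν - 1 / 2) / (2 * Gamma ν) := by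
  have h := integral_image_eq_integral_abs_deriv_smul measurableSet_Ioi
    (fun t _ => (hasDerivAt_sq_div_one_add_sq t).hasDerivWithinAt)
    strictMonoOn_sq_div_one_add_sq.injOn fun x => x ^ ((1 : ℝ) / 2 - 1) * (1 - x) ^ (ν - 1 / 2 - 1)
  rw [image_sq_div_one_add_sq_Ioi, integral_Ioo_rpow_mul_one_sub_rpow one_half_pos (by linarith),
    add_sub_cancel, Gamma_one_half_eq,
    setIntegral_congr_fun measurableSet_Ioi fun t ht => abs_deriv_mul_beta_integrand ht ν,
    integral_const_mul] at h
  rw [mul_comm 2 (Gamma ν), ← div_div, h, mul_div_cancel_left₀ _ two_ne_zero]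

theorem sqrt_pi_div_two_mul_Gamma {ν : ℝ} (hν : 0 < ν) :
    √π / (2 * Gamma ν) = 4 ^ (ν - 1) * Gamma (ν + 1 / 2) / Gamma (2 * ν) := by
  have h4 : (4 : ℝ) ^ (ν - 1) * 2 ^ (1 - 2 * ν) = 2⁻¹ := by
    rw [show (4 : ℝ) = 2 ^ 2 by norm_num, ← rpow_natCast_mul zero_le_two, ← rpow_add two_pos,
      show (2 : ℕ) * (ν - 1) + (1 - 2 * ν) = -1 by push_cast; ring, rpow_neg_one]
  have hΓ := (Gamma_pos_of_pos hν).ne'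
  have hΓ2 := (Gamma_pos_of_pos (mul_pos two_pos hν)).ne'
  rw [div_eq_div_iff (mul_ne_zero two_ne_zero hΓ) hΓ2]
  linear_combination (-2 * 4 ^ (ν - 1)) * Gamma_mul_Gamma_add_half ν - 2 * Gamma (2 * ν) * √π * h4

/-- For `a,b > 0` and `ν > 1/2`:
`∫₀^∞ [x²/((x²+a²)(x²+b²))]^ν dx = 4^{ν−1}Γ(ν+1/2)Γ(ν−1/2)/(Γ(2ν)(a+b)^{2ν−1})`. -/
theorem integral_rpow_sq_over_product (a b ν : ℝ) (ha : 0 < a) (hb : 0 < b)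
    (hν : 1 / 2 < ν) :
    ∫ x in Ioi (0:ℝ), (x ^ 2 / ((x ^ 2 + a ^ 2) * (x ^ 2 + b ^ 2))) ^ ν
      = (4:ℝ) ^ (ν - 1) * Real.Gamma (ν + 1 / 2) * Real.Gamma (ν - 1 / 2) /
          (Real.Gamma (2 * ν) * (a + b) ^ (2 * ν - 1)) := by
  have hab : 0 < a + b := add_pos ha hb
  have hbase : ∀ x ∈ Ioi (0 : ℝ), (x ^ 2 / ((x ^ 2 + a ^ 2) * (x ^ 2 + b ^ 2))) ^ ν =
      ((x - a * b / x) ^ 2 + (a + b) ^ 2) ^ (-ν) := fun x (hx : 0 < x) => by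
    have : x ^ 2 / ((x ^ 2 + a ^ 2) * (x ^ 2 + b ^ 2)) = ((x - a * b / x) ^ 2 + (a + b) ^ 2)⁻¹ := by
      field_simp
      ring
    rw [this, inv_rpow (by positivity), rpow_neg (by positivity)]
  rw [setIntegral_congr_fun measurableSet_Ioi hbase,
    integral_Ioi_comp_sub_div_of_even (mul_pos ha hb) (integrable_sq_add_sq_rpow_neg hab.ne' hν)
      (fun u => by simp only [neg_sq]),
    integral_Ioi_sq_add_sq_rpow_neg hab, integral_Ioi_one_add_sq_rpow_neg hν, mul_div_right_comm,
    sqrt_pi_div_two_mul_Gamma (by linarith), show 1 - 2 * ν = -(2 * ν - 1) by ring,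
    rpow_neg hab.le]
  field_simp
end Substitution
end

section
/- Let p > 0 and β ∈ ℝ. Let G : (0,∞) → ℝ be measurable with Laplace transform F(x) = ∫₀^∞ e^{−x t} G(t) dt converging absolutely for every x ≥ p, and assume the function (y,t) ↦ e^{−(y²+p) t} G(t) is integrable on (0,∞) × (0,∞). Then ∫₀^∞ t^{−1/2} e^{−p t − β²/(4t)} G(t) dt = (2/√π) ∫₀^∞ F(y² + p) cos(β y) dy. -/
/-!
Expanding `F (y² + p)` as a Laplace integral and exchanging the two integrations (Fubini, by
`hprod`), the `y`-integral becomes the cosine transform of a Gaussian,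
`∫₀^∞ e^{-t y²} cos (β y) dy = ½ √(π / t) e^{-β² / (4t)}`, i.e. the real part of the Fourier
transform of `e^{-t y²}` halved by evenness. Multiplying by `e^{-p t} G t` and integrating in `t`
gives the left-hand side up to the factor `√π / 2`.
-/

open MeasureTheory Set

section

open Real

theorem integral_exp_neg_mul_sq_mul_cos {b : ℝ} (hb : 0 < b) (β : ℝ) :
    ∫ y : ℝ, exp (-(b * y ^ 2)) * cos (β * y) = √(π / b) * exp (-(β ^ 2 / (4 * b))) := by
  have hb' : 0 < (b : ℂ).re := by simpa using hb
  have hphase (y : ℝ) : Complex.I * β * y = ((β * y : ℝ) : ℂ) * Complex.I := by push_cast; ring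
  have hgauss (y : ℝ) : -(b : ℂ) * y ^ 2 = ((-(b * y ^ 2) : ℝ) : ℂ) := by push_cast; ring
  have hint : Integrable
      (fun y : ℝ => Complex.exp (Complex.I * β * y) * Complex.exp (-b * y ^ 2)) :=
    (integrable_cexp_neg_mul_sq hb').bdd_mul (c := 1) (by fun_prop)
      (.of_forall fun y => by rw [hphase, Complex.norm_exp_ofReal_mul_I])
  have hre (y : ℝ) : (Complex.exp (Complex.I * β * y) * Complex.exp (-b * y ^ 2)).re
      = exp (-(b * y ^ 2)) * cos (β * y) := by
    rw [hphase, hgauss, mul_comm, ← Complex.ofReal_exp, Complex.re_ofReal_mul,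
      Complex.exp_ofReal_mul_I_re]
  calc ∫ y : ℝ, exp (-(b * y ^ 2)) * cos (β * y)
      = (∫ y : ℝ, Complex.exp (Complex.I * β * y) * Complex.exp (-b * y ^ 2)).re := by
        simp_rw [← hre]; exact integral_re hint
    _ = √(π / b) * exp (-(β ^ 2 / (4 * b))) := by
        have hexp : -(β : ℂ) ^ 2 / (4 * b) = ((-(β ^ 2 / (4 * b)) : ℝ) : ℂ) := by push_cast; ring
        have hroot : ((π / b : ℝ) : ℂ) ^ (1 / 2 : ℂ) = ((√(π / b) : ℝ) : ℂ) := by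
          rw [sqrt_eq_rpow, Complex.ofReal_cpow (by positivity)]; norm_num
        rw [fourierIntegral_gaussian hb', hexp, ← Complex.ofReal_div, hroot,
          ← Complex.ofReal_exp, ← Complex.ofReal_mul, Complex.ofReal_re]

theorem integral_Ioi_exp_neg_mul_sq_mul_cos {b : ℝ} (hb : 0 < b) (β : ℝ) :
    ∫ y in Ioi (0 : ℝ), exp (-(b * y ^ 2)) * cos (β * y)
      = √(π / b) / 2 * exp (-(β ^ 2 / (4 * b))) := by
  have heven := integral_comp_abs (f := fun y => exp (-(b * y ^ 2)) * cos (β * y))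
  have hcos (y : ℝ) : cos (β * |y|) = cos (β * y) := by
    rcases abs_choice y with h | h <;> simp [h]
  simp only [sq_abs, hcos, integral_exp_neg_mul_sq_mul_cos hb] at heven
  linarith

theorem integral_Ioi_exp_neg_sq_add_mul_mul_cos (p β : ℝ) {t : ℝ} (ht : 0 < t) :
    ∫ y in Ioi (0 : ℝ), exp (-((y ^ 2 + p) * t)) * cos (β * y)
      = √π / 2 * (t ^ (-(1 : ℝ) / 2) * exp (-(p * t) - β ^ 2 / (4 * t))) := by
  have hsplit (y : ℝ) : exp (-((y ^ 2 + p) * t)) * cos (β * y)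
      = exp (-(t * y ^ 2)) * cos (β * y) * exp (-(p * t)) := by
    rw [mul_right_comm, ← exp_add]; ring_nf
  have hrpow : t ^ (-(1 : ℝ) / 2) = (√t)⁻¹ := by
    rw [neg_div, rpow_neg ht.le, sqrt_eq_rpow, one_div]
  simp_rw [hsplit]
  rw [integral_mul_const, integral_Ioi_exp_neg_mul_sq_mul_cos ht, hrpow, sqrt_div' _ ht.le,
    sub_eq_add_neg, exp_add]
  ring

end

theorem integral_rpow_exp_laplace_cos_general (p β : ℝ) (G F : ℝ → ℝ)
    (hF : ∀ x, p ≤ x → F x = ∫ t in Ioi (0:ℝ), Real.exp (-(x * t)) * G t)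
    (hprod : Integrable
      (fun q : ℝ × ℝ => Real.exp (-((q.1 ^ 2 + p) * q.2)) * G q.2)
      ((volume.restrict (Ioi (0:ℝ))).prod (volume.restrict (Ioi (0:ℝ))))) :
    ∫ t in Ioi (0:ℝ), t ^ (-(1:ℝ)/2) * Real.exp (-(p * t) - β ^ 2 / (4 * t)) * G t
      = 2 / Real.sqrt Real.pi * ∫ y in Ioi (0:ℝ), F (y ^ 2 + p) * Real.cos (β * y) := by
  have hprod_cos : Integrable
      (fun q : ℝ × ℝ => Real.cos (β * q.1) * (Real.exp (-((q.1 ^ 2 + p) * q.2)) * G q.2))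
      ((volume.restrict (Ioi (0:ℝ))).prod (volume.restrict (Ioi (0:ℝ)))) :=
    hprod.bdd_mul (c := 1) (by fun_prop) (.of_forall fun q => by
      simpa using Real.abs_cos_le_one _)
  have hexpand : ∀ y ∈ Ioi (0:ℝ), F (y ^ 2 + p) * Real.cos (β * y)
      = ∫ t in Ioi (0:ℝ), Real.cos (β * y) * (Real.exp (-((y ^ 2 + p) * t)) * G t) := by
    intro y _
    rw [hF _ (le_add_of_nonneg_left (sq_nonneg y)), integral_const_mul, mul_comm]
  have hinner : ∀ t ∈ Ioi (0:ℝ),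
      ∫ y in Ioi (0:ℝ), Real.cos (β * y) * (Real.exp (-((y ^ 2 + p) * t)) * G t)
        = Real.sqrt Real.pi / 2 *
            (t ^ (-(1:ℝ)/2) * Real.exp (-(p * t) - β ^ 2 / (4 * t)) * G t) := by
    intro t ht
    simp_rw [← mul_assoc, mul_comm (Real.cos _)]
    rw [integral_mul_const, integral_Ioi_exp_neg_sq_add_mul_mul_cos p β ht]
    ring
  rw [setIntegral_congr_fun measurableSet_Ioi hexpand, integral_integral_swap hprod_cos,
    setIntegral_congr_fun measurableSet_Ioi hinner, integral_const_mul]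
  have hsqrt_pi : Real.sqrt Real.pi ≠ 0 := (Real.sqrt_pos.mpr Real.pi_pos).ne'
  rw [← mul_assoc, show 2 / Real.sqrt Real.pi * (Real.sqrt Real.pi / 2) = 1 by field_simp, one_mul]

/-- If `F` is the Laplace transform of `G` (converging absolutely for all `x ≥ p`), `p > 0`, and
`(y,t) ↦ e^{−(y²+p)t} G(t)` is integrable on `(0,∞) × (0,∞)`, then
`∫₀^∞ t^{−1/2} e^{−p t − β²/(4t)} G(t) dt = (2/√π) ∫₀^∞ F(y²+p) cos(β y) dy`. -/
theorem integral_rpow_exp_laplace_cos (p β : ℝ) (hp : 0 < p) (G F : ℝ → ℝ)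
    (hG : Measurable G)
    (hFconv : ∀ x, p ≤ x → IntegrableOn (fun t => Real.exp (-(x * t)) * G t) (Ioi 0))
    (hF : ∀ x, p ≤ x → F x = ∫ t in Ioi (0:ℝ), Real.exp (-(x * t)) * G t)
    (hprod : Integrable
      (fun q : ℝ × ℝ => Real.exp (-((q.1 ^ 2 + p) * q.2)) * G q.2)
      ((volume.restrict (Ioi (0:ℝ))).prod (volume.restrict (Ioi (0:ℝ))))) :
    ∫ t in Ioi (0:ℝ), t ^ (-(1:ℝ)/2) * Real.exp (-(p * t) - β ^ 2 / (4 * t)) * G t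
      = 2 / Real.sqrt Real.pi * ∫ y in Ioi (0:ℝ), F (y ^ 2 + p) * Real.cos (β * y) :=
  integral_rpow_exp_laplace_cos_general p β G F hF hprod
end

section
/- Let a > 0, b > 0, s ∈ ℝ, and let α, β be real numbers with α > 0 and β > 0. Then ∫₀¹ x^{α−1} (1−x)^{β−1} (a x + b(1−x))^{−(α+β)} · exp(s x / (a x + b(1−x))) dx = B(α,β) · a^{−α} · b^{−β} · ₁F₁(α; α+β; s/a). -/
open MeasureTheory Set

/-- The confluent hypergeometric series `₁F₁(a;b;z)`. -/
noncomputable def hyp1F1 (a b z : ℝ) : ℝ :=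
  ∑' n : ℕ, poch a n / poch b n * z ^ n / n.factorial

/-- The Beta function `B(x,y) = Γ(x)Γ(y)/Γ(x+y)`. -/
noncomputable def betaFn (x y : ℝ) : ℝ := Real.Gamma x * Real.Gamma y / Real.Gamma (x + y)

/-! The substitution `x = b u / (b u + a (1 - u))` maps `(0, 1)` onto itself, has Jacobian
`a b / (b u + a (1 - u))²`, and turns the integrand into
`a^{-α} b^{-β} u^{α-1} (1-u)^{β-1} e^{s u / a}`. Expanding the exponential and integrating term by
term, `B(α + n, β) = B(α, β) (α)ₙ / (α + β)ₙ` gives the series of `₁F₁(α; α + β; s/a)`. -/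

lemma Real.Gamma_add_nat_eq_poch_mul {x : ℝ} (hx : 0 < x) (n : ℕ) :
    Real.Gamma (x + n) = poch x n * Real.Gamma x := by
  induction n with
  | zero => simp [poch]
  | succ n ih =>
    rw [Nat.cast_succ, ← add_assoc, Real.Gamma_add_one (by positivity), ih]
    simp only [poch, Finset.prod_range_succ]
    ring

lemma betaFn_add_nat_left {α β : ℝ} (hα : 0 < α) (hβ : 0 < β) (n : ℕ) :
    betaFn (α + n) β = betaFn α β * (poch α n / poch (α + β) n) := by
  have hpoch : 0 < poch (α + β) n := Finset.prod_pos fun i _ => by positivity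
  have hΓ : 0 < Real.Gamma (α + β) := Real.Gamma_pos_of_pos (by positivity)
  rw [betaFn, betaFn, add_right_comm, Real.Gamma_add_nat_eq_poch_mul hα,
    Real.Gamma_add_nat_eq_poch_mul (add_pos hα hβ)]
  field_simp

lemma ofReal_betaKernel {p q x : ℝ} (hx : x ∈ Icc (0 : ℝ) 1) :
    (((x ^ (p - 1) * (1 - x) ^ (q - 1) : ℝ)) : ℂ)
      = (x : ℂ) ^ ((p : ℂ) - 1) * (1 - (x : ℂ)) ^ ((q : ℂ) - 1) := by
  rw [Complex.ofReal_mul, Complex.ofReal_cpow hx.1, Complex.ofReal_cpow (sub_nonneg.2 hx.2)]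
  push_cast
  rfl

lemma integrableOn_betaKernel {p q : ℝ} (hp : 0 < p) (hq : 0 < q) :
    IntegrableOn (fun x : ℝ => x ^ (p - 1) * (1 - x) ^ (q - 1)) (Ioo 0 1) := by
  have hc := (Complex.betaIntegral_convergent (u := p) (v := q) (by simpa) (by simpa)).1
  have h : IntegrableOn
      (fun x : ℝ => ((x : ℂ) ^ ((p : ℂ) - 1) * (1 - (x : ℂ)) ^ ((q : ℂ) - 1)).re) (Ioo 0 1) :=
    (hc.mono_set Ioo_subset_Ioc_self).re
  refine h.congr_fun (fun x hx => ?_) measurableSet_Ioo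
  simp only [← ofReal_betaKernel (Ioo_subset_Icc_self hx), Complex.ofReal_re]

lemma integral_betaKernel {p q : ℝ} (hp : 0 < p) (hq : 0 < q) :
    ∫ x in Ioo (0 : ℝ) 1, x ^ (p - 1) * (1 - x) ^ (q - 1) = betaFn p q := by
  have hbeta : betaFn p q = ProbabilityTheory.beta p q := rfl
  have h := ProbabilityTheory.beta_eq_betaIntegralReal p q hp hq
  rw [Complex.betaIntegral, intervalIntegral.integral_of_le zero_le_one,
    integral_Ioc_eq_integral_Ioo,
    setIntegral_congr_fun measurableSet_Ioo fun x hx =>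
      (ofReal_betaKernel (Ioo_subset_Icc_self hx)).symm,
    integral_complex_ofReal, Complex.ofReal_re] at h
  rw [hbeta, h]

lemma integral_betaKernel_mul_pow {α β : ℝ} (hα : 0 < α) (hβ : 0 < β) (n : ℕ) :
    ∫ x in Ioo (0 : ℝ) 1, x ^ (α - 1) * (1 - x) ^ (β - 1) * x ^ n
      = betaFn α β * (poch α n / poch (α + β) n) := by
  rw [← betaFn_add_nat_left hα hβ, ← integral_betaKernel (by positivity) hβ]
  refine setIntegral_congr_fun measurableSet_Ioo fun x hx => ?_
  rw [add_sub_right_comm, Real.rpow_add_natCast hx.1.ne']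
  ring

lemma norm_betaKernel_mul_exp_term_le {α β z x : ℝ} (hx : x ∈ Ioo (0 : ℝ) 1) (n : ℕ) :
    ‖x ^ (α - 1) * (1 - x) ^ (β - 1) * ((z * x) ^ n / n.factorial)‖
      ≤ |z| ^ n / n.factorial * (x ^ (α - 1) * (1 - x) ^ (β - 1)) := by
  have hk : 0 ≤ x ^ (α - 1) * (1 - x) ^ (β - 1) :=
    mul_nonneg (Real.rpow_nonneg hx.1.le _) (Real.rpow_nonneg (sub_nonneg.2 hx.2.le) _)
  have hxn : x ^ n ≤ 1 := pow_le_one₀ hx.1.le hx.2.le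
  rw [norm_mul, Real.norm_of_nonneg hk, norm_div, norm_pow, Real.norm_eq_abs, abs_mul,
    abs_of_pos hx.1, mul_pow, RCLike.norm_natCast, mul_comm]
  gcongr
  exact mul_le_of_le_one_right (by positivity) hxn

/-- Kummer's integral representation of `₁F₁`. -/
lemma integral_betaKernel_mul_exp {α β : ℝ} (hα : 0 < α) (hβ : 0 < β) (z : ℝ) :
    ∫ x in Ioo (0 : ℝ) 1, x ^ (α - 1) * (1 - x) ^ (β - 1) * Real.exp (z * x)
      = betaFn α β * hyp1F1 α (α + β) z := by
  set F : ℕ → ℝ → ℝ := fun n x => x ^ (α - 1) * (1 - x) ^ (β - 1) * ((z * x) ^ n / n.factorial)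
  have hF_eq : ∀ n x, F n x = z ^ n / n.factorial * (x ^ (α - 1) * (1 - x) ^ (β - 1) * x ^ n) :=
    fun n x => by simp only [F, mul_pow]; ring
  have hF_int : ∀ n, IntegrableOn (F n) (Ioo 0 1) := fun n =>
    Integrable.mono' ((integrableOn_betaKernel hα hβ).const_mul _)
      (by fun_prop : Measurable (F n)).aestronglyMeasurable
      ((ae_restrict_iff' measurableSet_Ioo).2 <| ae_of_all _ fun x hx =>
        norm_betaKernel_mul_exp_term_le hx n)
  have hF_sum : Summable fun n => ∫ x in Ioo (0 : ℝ) 1, ‖F n x‖ := by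
    refine Summable.of_nonneg_of_le (fun n => integral_nonneg fun x => norm_nonneg _)
      (fun n => setIntegral_mono_on (hF_int n).norm
        ((integrableOn_betaKernel hα hβ).const_mul _) measurableSet_Ioo
        fun x hx => norm_betaKernel_mul_exp_term_le hx n) ?_
    simp only [integral_const_mul]
    exact (Real.summable_pow_div_factorial |z|).mul_right _
  have hF_tsum : ∀ x, ∑' n, F n x = x ^ (α - 1) * (1 - x) ^ (β - 1) * Real.exp (z * x) := by
    intro x
    rw [tsum_mul_left, Real.exp_eq_exp_ℝ, NormedSpace.exp_eq_tsum_div]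
  calc ∫ x in Ioo (0 : ℝ) 1, x ^ (α - 1) * (1 - x) ^ (β - 1) * Real.exp (z * x)
      = ∫ x in Ioo (0 : ℝ) 1, ∑' n, F n x := by simp only [hF_tsum]
    _ = ∑' n, ∫ x in Ioo (0 : ℝ) 1, F n x :=
      (integral_tsum_of_summable_integral_norm hF_int hF_sum).symm
    _ = ∑' n : ℕ, betaFn α β * (poch α n / poch (α + β) n * z ^ n / n.factorial) := by
      congr 1 with n
      rw [funext (hF_eq n), integral_const_mul, integral_betaKernel_mul_pow hα hβ]
      ring
    _ = betaFn α β * hyp1F1 α (α + β) z := by rw [tsum_mul_left, hyp1F1]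

noncomputable def unitIntervalMobius (a b u : ℝ) : ℝ := b * u / (b * u + a * (1 - u))

section UnitIntervalMobius

variable {a b : ℝ}

lemma unitIntervalMobius_denom_pos (ha : 0 < a) (hb : 0 < b) {u : ℝ} (hu : u ∈ Ioo (0 : ℝ) 1) :
    0 < b * u + a * (1 - u) := by
  have := sub_pos.2 hu.2
  have := hu.1
  positivity

lemma mapsTo_unitIntervalMobius (ha : 0 < a) (hb : 0 < b) :
    MapsTo (unitIntervalMobius a b) (Ioo 0 1) (Ioo 0 1) := fun u hu => by
  have hD := unitIntervalMobius_denom_pos ha hb hu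
  have := sub_pos.2 hu.2
  have := hu.1
  rw [unitIntervalMobius, mem_Ioo, div_lt_one hD]
  constructor
  · positivity
  · nlinarith

lemma leftInvOn_unitIntervalMobius (ha : 0 < a) (hb : 0 < b) :
    LeftInvOn (unitIntervalMobius b a) (unitIntervalMobius a b) (Ioo 0 1) := fun u hu => by
  have hD := unitIntervalMobius_denom_pos ha hb hu
  rw [unitIntervalMobius, unitIntervalMobius]
  field_simp
  rw [show a * u + (b * u + a * (1 - u) - b * u) = a by ring]
  field_simp

lemma image_unitIntervalMobius (ha : 0 < a) (hb : 0 < b) :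
    unitIntervalMobius a b '' Ioo 0 1 = Ioo 0 1 :=
  (mapsTo_unitIntervalMobius ha hb).image_subset.antisymm fun _ hx =>
    ⟨_, mapsTo_unitIntervalMobius hb ha hx, leftInvOn_unitIntervalMobius hb ha hx⟩

lemma hasDerivAt_unitIntervalMobius (ha : 0 < a) (hb : 0 < b) {u : ℝ}
    (hu : u ∈ Ioo (0 : ℝ) 1) :
    HasDerivAt (unitIntervalMobius a b) (a * b / (b * u + a * (1 - u)) ^ 2) u := by
  have hD := unitIntervalMobius_denom_pos ha hb hu
  have hnum : HasDerivAt (fun u => b * u) b u := by simpa using (hasDerivAt_id u).const_mul b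
  have hden : HasDerivAt (fun u => b * u + a * (1 - u)) (b - a) u :=
    (hnum.fun_add (((hasDerivAt_id' u).const_sub 1).const_mul a)).congr_deriv (by ring)
  exact (hnum.fun_div hden hD.ne').congr_deriv (by ring)

lemma integral_Ioo_eq_integral_comp_unitIntervalMobius (ha : 0 < a) (hb : 0 < b)
    {E : Type*} [NormedAddCommGroup E] [NormedSpace ℝ E] (f : ℝ → E) :
    ∫ x in Ioo (0 : ℝ) 1, f x
      = ∫ u in Ioo (0 : ℝ) 1,
          (a * b / (b * u + a * (1 - u)) ^ 2) • f (unitIntervalMobius a b u) := by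
  have h := integral_image_eq_integral_abs_deriv_smul measurableSet_Ioo
    (fun u hu => (hasDerivAt_unitIntervalMobius ha hb hu).hasDerivWithinAt)
    (leftInvOn_unitIntervalMobius ha hb).injOn f
  rw [image_unitIntervalMobius ha hb] at h
  rw [h]
  refine setIntegral_congr_fun measurableSet_Ioo fun u hu => ?_
  rw [abs_of_pos (by have := unitIntervalMobius_denom_pos ha hb hu; positivity)]

end UnitIntervalMobius

lemma div_sq_mul_rpow_mul_rpow_mul_rpow {a b u v D p q : ℝ} (ha : 0 < a) (hb : 0 < b)
    (hu : 0 < u) (hv : 0 < v) (hD : 0 < D) :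
    a * b / D ^ 2 * ((b * u / D) ^ (p - 1) * (a * v / D) ^ (q - 1) * (a * b / D) ^ (-(p + q)))
      = a ^ (-p) * b ^ (-q) * (u ^ (p - 1) * v ^ (q - 1)) := by
  refine Real.log_injOn_pos (mem_Ioi.2 (by positivity)) (mem_Ioi.2 (by positivity)) ?_
  simp (disch := positivity) only [Real.log_mul, Real.log_div, Real.log_rpow, Real.log_pow]
  ring

lemma feynman_integrand_comp_unitIntervalMobius {a b : ℝ} (ha : 0 < a) (hb : 0 < b)
    (α β s : ℝ) {u : ℝ} (hu : u ∈ Ioo (0 : ℝ) 1) :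
    let x := unitIntervalMobius a b u
    (a * b / (b * u + a * (1 - u)) ^ 2) •
        (x ^ (α - 1) * (1 - x) ^ (β - 1) * (a * x + b * (1 - x)) ^ (-(α + β)) *
          Real.exp (s * x / (a * x + b * (1 - x))))
      = a ^ (-α) * b ^ (-β) * (u ^ (α - 1) * (1 - u) ^ (β - 1) * Real.exp (s / a * u)) := by
  intro x
  have hD := unitIntervalMobius_denom_pos ha hb hu
  set D := b * u + a * (1 - u)
  have hx : x = b * u / D := rfl
  have h1x : 1 - x = a * (1 - u) / D := by rw [hx]; field_simp; ring
  have hax : a * x + b * (1 - x) = a * b / D := by rw [h1x, hx]; field_simp; ring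
  have harg : s * x / (a * b / D) = s / a * u := by rw [hx]; field_simp
  rw [hax, harg, h1x, hx, smul_eq_mul]
  linear_combination Real.exp (s / a * u) *
    div_sq_mul_rpow_mul_rpow_mul_rpow (p := α) (q := β) ha hb hu.1 (sub_pos.2 hu.2) hD

/-- For `a,b > 0`, `s ∈ ℝ`, `α,β > 0`:
`∫₀¹ x^{α−1}(1−x)^{β−1}(ax+b(1−x))^{−(α+β)} e^{sx/(ax+b(1−x))} dx
  = B(α,β) a^{−α} b^{−β} ₁F₁(α;α+β;s/a)`. -/
theorem feynman_exp_integral (a b s α β : ℝ) (ha : 0 < a) (hb : 0 < b)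
    (hα : 0 < α) (hβ : 0 < β) :
    ∫ x in Ioo (0:ℝ) 1,
        x ^ (α - 1) * (1 - x) ^ (β - 1) * (a * x + b * (1 - x)) ^ (-(α + β)) *
          Real.exp (s * x / (a * x + b * (1 - x)))
      = betaFn α β * a ^ (-α) * b ^ (-β) * hyp1F1 α (α + β) (s / a) := by
  rw [integral_Ioo_eq_integral_comp_unitIntervalMobius ha hb,
    setIntegral_congr_fun measurableSet_Ioo fun u hu =>
      feynman_integrand_comp_unitIntervalMobius ha hb α β s hu,
    integral_const_mul, integral_betaKernel_mul_exp hα hβ]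
  ring
end

section
/- Let a > 0, b > 0 and s > 0. Then ∫₀¹ x^{−1/2} (a x + b(1−x))^{−3/2} · sinh(2 √(s x / (a x + b(1−x)))) dx = (1/(b √s)) · (cosh(2 √(s/a)) − 1). -/
/-!
The substitution `u = s x / (a x + b (1 - x))` has `du = s b dx / (a x + b (1 - x))²`, so the
integrand is the derivative of `cosh (2 √u) / (b √s)`. Being nonnegative, the integrand is
integrable, and the fundamental theorem of calculus gives `(cosh (2 √(s / a)) - 1) / (b √s)`.
-/

open MeasureTheory Set Real

theorem integral_Ioo_eq_sub_of_hasDerivAt_of_nonneg {g g' : ℝ → ℝ} {a b : ℝ} (hab : a ≤ b)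
    (hcont : ContinuousOn g (Icc a b)) (hderiv : ∀ x ∈ Ioo a b, HasDerivAt g (g' x) x)
    (hpos : ∀ x ∈ Ioo a b, 0 ≤ g' x) : ∫ x in Ioo a b, g' x = g b - g a := by
  rw [← integral_Ioc_eq_integral_Ioo, ← intervalIntegral.integral_of_le hab]
  refine intervalIntegral.integral_eq_sub_of_hasDerivAt_of_le hab hcont hderiv ?_
  rw [intervalIntegrable_iff_integrableOn_Ioc_of_le hab]
  exact intervalIntegral.integrableOn_deriv_of_nonneg hcont hderiv hpos

theorem HasDerivAt.cosh_two_mul_sqrt {u : ℝ → ℝ} {u' x : ℝ} (hu : HasDerivAt u u' x)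
    (hx : 0 < u x) :
    HasDerivAt (fun y => Real.cosh (2 * √(u y)))
      (Real.sinh (2 * √(u x)) * (u' / √(u x))) x := by
  refine ((hu.sqrt hx.ne').const_mul 2).cosh.congr_deriv ?_
  have : √(u x) ≠ 0 := (sqrt_pos.mpr hx).ne'
  field_simp

section Interpolation

variable {a b x : ℝ}

theorem mul_add_mul_one_sub_pos (ha : 0 < a) (hb : 0 < b) (hx : x ∈ Icc (0 : ℝ) 1) :
    0 < a * x + b * (1 - x) := by
  have hmin : min a b ≤ a * x + b * (1 - x) := by
    nlinarith [hx.1, hx.2, min_le_left a b, min_le_right a b]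
  exact (lt_min ha hb).trans_le hmin

theorem hasDerivAt_mul_div_mul_add_mul_one_sub (s : ℝ) (hx : a * x + b * (1 - x) ≠ 0) :
    HasDerivAt (fun y => s * y / (a * y + b * (1 - y))) (s * b / (a * x + b * (1 - x)) ^ 2) x := by
  have hD : HasDerivAt (fun y => a * y + b * (1 - y)) (a - b) x :=
    (((hasDerivAt_id' x).const_mul a).add
      (((hasDerivAt_id' x).const_sub 1).const_mul b)).congr_deriv (by ring)
  refine (((hasDerivAt_id' x).const_mul s).div hD hx).congr_deriv ?_
  ring

end Interpolation

section Feynman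

variable {a b s : ℝ}

theorem hasDerivAt_cosh_two_mul_sqrt_div (ha : 0 < a) (hb : 0 < b) (hs : 0 < s) {x : ℝ}
    (hx : x ∈ Ioo (0 : ℝ) 1) :
    HasDerivAt (fun y => Real.cosh (2 * √(s * y / (a * y + b * (1 - y)))) / (b * √s))
      (x ^ (-(1:ℝ)/2) * (a * x + b * (1 - x)) ^ (-(3:ℝ)/2) *
        Real.sinh (2 * √(s * x / (a * x + b * (1 - x))))) x := by
  have hD := mul_add_mul_one_sub_pos ha hb (Ioo_subset_Icc_self hx)
  have hu := (hasDerivAt_mul_div_mul_add_mul_one_sub s hD.ne').cosh_two_mul_sqrt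
    (div_pos (mul_pos hs hx.1) hD)
  refine (hu.div_const _).congr_deriv ?_
  generalize a * x + b * (1 - x) = D at hD ⊢
  have hx_rpow : x ^ (-(1:ℝ)/2) = (√x)⁻¹ := by
    rw [show -(1:ℝ)/2 = -(1/2) by norm_num, rpow_neg hx.1.le, ← sqrt_eq_rpow]
  have hD_rpow : D ^ (-(3:ℝ)/2) = (D * √D)⁻¹ := by
    rw [show -(3:ℝ)/2 = -(1 + 1/2) by norm_num, rpow_neg hD.le, rpow_add hD, rpow_one,
      ← sqrt_eq_rpow]
  rw [hx_rpow, hD_rpow, sqrt_div (mul_pos hs hx.1).le, sqrt_mul hs.le]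
  have hs' := sqrt_pos.mpr hs
  have hx' := sqrt_pos.mpr hx.1
  have hD' := sqrt_pos.mpr hD
  field_simp
  rw [sq_sqrt hs.le, sq_sqrt hD.le, mul_comm]

theorem continuousOn_cosh_two_mul_sqrt_div (ha : 0 < a) (hb : 0 < b) :
    ContinuousOn (fun y => Real.cosh (2 * √(s * y / (a * y + b * (1 - y)))) / (b * √s))
      (Icc 0 1) := by
  refine (continuous_cosh.comp_continuousOn (continuousOn_const.mul ?_)).div_const _
  refine continuous_sqrt.comp_continuousOn (ContinuousOn.div (by fun_prop) (by fun_prop) ?_)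
  exact fun x hx => (mul_add_mul_one_sub_pos ha hb hx).ne'

theorem feynman_integrand_nonneg (ha : 0 < a) (hb : 0 < b) {x : ℝ} (hx : x ∈ Ioo (0 : ℝ) 1) :
    0 ≤ x ^ (-(1:ℝ)/2) * (a * x + b * (1 - x)) ^ (-(3:ℝ)/2) *
      Real.sinh (2 * √(s * x / (a * x + b * (1 - x)))) := by
  have hD := mul_add_mul_one_sub_pos ha hb (Ioo_subset_Icc_self hx)
  exact mul_nonneg (mul_nonneg (rpow_nonneg hx.1.le _) (rpow_nonneg hD.le _))
    (sinh_nonneg_iff.mpr (by positivity))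

end Feynman

/-- For `a,b,s > 0`:
`∫₀¹ x^{−1/2}(ax+b(1−x))^{−3/2} sinh(2√(sx/(ax+b(1−x)))) dx
  = (1/(b√s))(cosh(2√(s/a)) − 1)`. -/
theorem feynman_sinh_integral (a b s : ℝ) (ha : 0 < a) (hb : 0 < b) (hs : 0 < s) :
    ∫ x in Ioo (0:ℝ) 1,
        x ^ (-(1:ℝ)/2) * (a * x + b * (1 - x)) ^ (-(3:ℝ)/2) *
          Real.sinh (2 * Real.sqrt (s * x / (a * x + b * (1 - x))))
      = 1 / (b * Real.sqrt s) * (Real.cosh (2 * Real.sqrt (s / a)) - 1) := by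
  rw [integral_Ioo_eq_sub_of_hasDerivAt_of_nonneg zero_le_one
    (continuousOn_cosh_two_mul_sqrt_div ha hb)
    (fun x hx => hasDerivAt_cosh_two_mul_sqrt_div ha hb hs hx)
    (fun x hx => feynman_integrand_nonneg ha hb hx)]
  norm_num
  ring
end
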